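/- arXiv:math/0310158 — 3 statements merged into one kernel-verified Lean document; each statement's English description precedes it below -/
import Mathlib

section
/- Let G be a finite group with subgroups H and K. Then the number of double cosets |H\G/K| equals the sum over a left transversal Ω of N_G(K) in G of the quantities [N_G(K) : K] · |ℓKℓ⁻¹ ∩ H| / |H|, i.e. |H\G/K| = Σ_{ℓ ∈ Ω} [N_G(K):K] · |ℓKℓ⁻¹ ∩ H| / |H|. -/
/-!
Let `H × K` act on `G` by `(h, k) • x = h * x * k⁻¹`. The orbits are the double cosets and the
stabilizer of `x` is isomorphic to `xKx⁻¹ ⊓ H`, so counting the pairs `(γ, x)` with `γ • x = x` in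
two ways gives `|H\G/K| * |H| * |K| = ∑ x : G, |xKx⁻¹ ⊓ H|`. The summand only depends on the coset
`x N_G(K)`, so the sum equals `|N_G(K)| * ∑ ℓ ∈ Ω, |ℓKℓ⁻¹ ⊓ H|`, and `|N_G(K)| = [N_G(K) : K] * |K|`.
-/

open MulAction

theorem MulAction.sum_card_stabilizer_eq_card_orbits_mul_card_group
    (Γ X : Type*) [Group Γ] [MulAction Γ X] [Finite Γ] [Fintype X] :
    ∑ x : X, Nat.card (stabilizer Γ x) = Nat.card (orbitRel.Quotient Γ X) * Nat.card Γ := by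
  have e : (Σ x : X, stabilizer Γ x) ≃ (Σ γ : Γ, fixedBy X γ) :=
    calc (Σ x : X, stabilizer Γ x)
        ≃ {p : X × Γ // p.2 • p.1 = p.1} := (Equiv.subtypeProdEquivSigmaSubtype _).symm
      _ ≃ {p : Γ × X // p.1 • p.2 = p.2} := (Equiv.prodComm X Γ).subtypeEquiv fun _ => Iff.rfl
      _ ≃ (Σ γ : Γ, fixedBy X γ) := Equiv.subtypeProdEquivSigmaSubtype fun γ x => γ • x = x
  rw [← Nat.card_sigma, Nat.card_congr (e.trans (sigmaFixedByEquivOrbitsProdGroup Γ X)),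
    Nat.card_prod]

theorem Subgroup.IsComplement.sum_eq_card_smul_sum {G M : Type*} [Group G] [Fintype G]
    [AddCommMonoid M] {N : Subgroup G} {Ω : Finset G} (hΩ : IsComplement (Ω : Set G) N)
    {f : G → M} (hf : ∀ g, ∀ n ∈ N, f (g * n) = f g) :
    ∑ g, f g = Nat.card N • ∑ ℓ ∈ Ω, f ℓ := by
  classical
  rw [← Fintype.sum_bijective _ hΩ (fun p => f (p.1 * p.2)) f fun _ => rfl,
    Fintype.sum_prod_type, Finset.smul_sum, ← Finset.sum_coe_sort Ω]
  simp only [hf _ _ (Subtype.prop _), Finset.sum_const, Finset.card_univ,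
    ← Nat.card_eq_fintype_card]
  rfl

theorem Subgroup.card_eq_relIndex_mul_card {G : Type*} [Group G] {K N : Subgroup G} (h : K ≤ N) :
    Nat.card N = K.relIndex N * Nat.card K := by
  rw [← relIndex_bot_left, ← relIndex_bot_left, mul_comm, relIndex_mul_relIndex _ _ _ bot_le h]

theorem Subgroup.map_conj_mul_of_mem_normalizer {G : Type*} [Group G] {K : Subgroup G} (g : G)
    {n : G} (hn : n ∈ normalizer (K : Set G)) :
    K.map (MulAut.conj (g * n)).toMonoidHom = K.map (MulAut.conj g).toMonoidHom := by
  conv_rhs => rw [← mem_normalizer_iff_map_conj_eq.mp hn, Subgroup.map_map]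
  rw [map_mul, MulAut.mul_def]
  rfl

namespace DoubleCoset

variable {G : Type*} [Group G] (H K : Subgroup G)

abbrev prodAction : MulAction (H × K) G where
  smul p x := p.1 * x * (p.2 : G)⁻¹
  one_smul x := by change 1 * x * 1⁻¹ = x; group
  mul_smul p q x := by
    change (p.1 * q.1 : G) * x * (p.2 * q.2 : G)⁻¹ = p.1 * (q.1 * x * (q.2 : G)⁻¹) * (p.2 : G)⁻¹
    group

attribute [local instance] prodAction

theorem prodAction_smul (p : H × K) (x : G) : p • x = p.1 * x * (p.2 : G)⁻¹ := rfl

theorem orbitRel_prodAction : orbitRel (H × K) G = setoid H K := by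
  refine Setoid.ext fun a b => ?_
  rw [rel_iff, orbitRel_apply, mem_orbit_iff]
  constructor
  · rintro ⟨⟨h, k⟩, rfl⟩
    exact ⟨h⁻¹, inv_mem h.2, k, k.2, by rw [prodAction_smul]; group⟩
  · rintro ⟨h, hh, k, hk, rfl⟩
    exact ⟨(⟨h⁻¹, inv_mem hh⟩, ⟨k, hk⟩), by rw [prodAction_smul]; group⟩

theorem mem_stabilizer_prodAction_iff {a : G} {p : H × K} :
    p ∈ stabilizer (H × K) a ↔ (p.2 : G) = a⁻¹ * p.1 * a := by
  rw [mem_stabilizer_iff, prodAction_smul, mul_inv_eq_iff_eq_mul, mul_assoc, eq_inv_mul_iff_mul_eq]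
  exact eq_comm

def stabilizerEquivMapConjInf (a : G) :
    stabilizer (H × K) a ≃ (K.map (MulAut.conj a).toMonoidHom ⊓ H : Subgroup G) where
  toFun p := ⟨p.1.1, by
    rw [Subgroup.mem_inf, Subgroup.mem_map_equiv, MulAut.conj_symm_apply,
      ← (mem_stabilizer_prodAction_iff H K).mp p.2]
    exact ⟨p.1.2.2, p.1.1.2⟩⟩
  invFun h := ⟨(⟨h, h.2.2⟩, ⟨a⁻¹ * h * a, Subgroup.mem_map_equiv.mp h.2.1⟩),
    (mem_stabilizer_prodAction_iff H K).mpr rfl⟩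
  left_inv p :=
    Subtype.ext (Prod.ext rfl (Subtype.ext ((mem_stabilizer_prodAction_iff H K).mp p.2).symm))
  right_inv _ := rfl

theorem card_quotient_mul_card_mul_card [Fintype G] :
    Nat.card (Quotient (H : Set G) K) * (Nat.card H * Nat.card K)
      = ∑ g : G, Nat.card (K.map (MulAut.conj g).toMonoidHom ⊓ H : Subgroup G) := by
  have hquot : Quotient (H : Set G) K ≃ orbitRel.Quotient (H × K) G :=
    Quotient.congrRight fun a b => by rw [orbitRel_prodAction]
  rw [← Nat.card_prod, Nat.card_congr hquot, ← sum_card_stabilizer_eq_card_orbits_mul_card_group]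
  exact Finset.sum_congr rfl fun a _ => Nat.card_congr (stabilizerEquivMapConjInf H K a)

end DoubleCoset

theorem card_doset_eq_sum_over_transversal
    {G : Type*} [Group G] [Fintype G] (H K : Subgroup G) (Ω : Finset G)
    (hΩ : Subgroup.IsComplement (Ω : Set G) (Subgroup.normalizer (K : Set G) : Set G)) :
    (Nat.card (DoubleCoset.Quotient (H : Set G) (K : Set G)) : ℚ)
      = ∑ ℓ ∈ Ω,
          ((K.relIndex (Subgroup.normalizer (K : Set G)) : ℚ)
            * (Nat.card ((K.map (MulAut.conj ℓ).toMonoidHom) ⊓ H : Subgroup G) : ℚ))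
          / (Nat.card H : ℚ) := by
  have key := DoubleCoset.card_quotient_mul_card_mul_card H K
  rw [hΩ.sum_eq_card_smul_sum fun g n hn => by rw [Subgroup.map_conj_mul_of_mem_normalizer g hn],
    Subgroup.card_eq_relIndex_mul_card Subgroup.le_normalizer, smul_eq_mul] at key
  have hH : (Nat.card H : ℚ) ≠ 0 := Nat.cast_ne_zero.mpr Nat.card_pos.ne'
  have hK : (Nat.card K : ℚ) ≠ 0 := Nat.cast_ne_zero.mpr Nat.card_pos.ne'
  rw [← Finset.sum_div, ← Finset.mul_sum, eq_div_iff hH]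
  refine mul_right_cancel₀ hK ?_
  qify at key
  linear_combination key
end

section
/- Let G be the dihedral group D₄ = ⟨x, y : x⁴ = y² = (xy)² = 1⟩. There do not exist elements c₁, c₂, c₃ ∈ D₄ with ⟨c₁⟩ conjugate to ⟨x⟩, ⟨c₂⟩ conjugate to ⟨x²⟩, ⟨c₃⟩ conjugate to ⟨x²⟩, such that c₁c₂c₃ = 1 and c₁, c₂, c₃ generate D₄. -/
/-! The rotation `x²` is central of order two, so every conjugate of `⟨x²⟩` is `⟨x²⟩` itself and its
only generator is `x²`. Hence `c₂ = c₃ = x²`, and `c₁ c₂ c₃ = 1` forces `c₁ = x⁻⁴ = 1`, which cannot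
generate a conjugate of the nontrivial subgroup `⟨x⟩`. -/

open DihedralGroup Subgroup

theorem Subgroup.map_conj_zpowers_of_mem_center {G : Type*} [Group G] {z : G} (hz : z ∈ center G)
    (g : G) : (zpowers z).map (MulAut.conj g).toMonoidHom = zpowers z := by
  rw [MonoidHom.map_zpowers, MulEquiv.coe_toMonoidHom, MulAut.conj_apply,
    mem_center_iff.mp hz g, mul_inv_cancel_right]

theorem eq_of_zpowers_eq_zpowers_of_orderOf_eq_two {G : Type*} [Group G] {a c : G}
    (ha : orderOf a = 2) (h : zpowers c = zpowers a) : c = a := by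
  classical
  have hfin : IsOfFinOrder a := orderOf_pos_iff.mp (by omega)
  have hc : c ∈ zpowers a := h ▸ mem_zpowers c
  obtain ⟨k, hk, rfl⟩ := Finset.mem_image.mp (hfin.mem_zpowers_iff_mem_range_orderOf.mp hc)
  rw [ha, Finset.mem_range] at hk
  interval_cases k
  · rw [pow_zero, zpowers_one_eq_bot, eq_comm, zpowers_eq_bot] at h
    simp [h] at ha
  · exact pow_one a

namespace DihedralGroup

theorem r_mem_center {n : ℕ} {i : ZMod n} (hi : 2 * i = 0) : r i ∈ center (DihedralGroup n) := by
  have hneg : -i = i := by rw [neg_eq_iff_add_eq_zero, ← two_mul, hi]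
  refine mem_center_iff.mpr fun g => ?_
  rcases g with j | j
  · rw [r_mul_r, r_mul_r, add_comm]
  · rw [r_mul_sr, sr_mul_r, sub_eq_add_neg, hneg]

end DihedralGroup

theorem no_generating_vector_for_dihedral_signature :
    ¬ ∃ c₁ c₂ c₃ : DihedralGroup 4,
      (∃ g : DihedralGroup 4,
        Subgroup.zpowers c₁
          = (Subgroup.zpowers (DihedralGroup.r 1)).map (MulAut.conj g).toMonoidHom)
      ∧ (∃ g : DihedralGroup 4,
        Subgroup.zpowers c₂
          = (Subgroup.zpowers (DihedralGroup.r 2)).map (MulAut.conj g).toMonoidHom)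
      ∧ (∃ g : DihedralGroup 4,
        Subgroup.zpowers c₃
          = (Subgroup.zpowers (DihedralGroup.r 2)).map (MulAut.conj g).toMonoidHom)
      ∧ c₁ * c₂ * c₃ = 1
      ∧ Subgroup.closure {c₁, c₂, c₃} = ⊤ := by
  rintro ⟨c₁, c₂, c₃, ⟨g₁, h₁⟩, ⟨g₂, h₂⟩, ⟨g₃, h₃⟩, hprod, -⟩
  have hcenter : r 2 ∈ center (DihedralGroup 4) := r_mem_center (by decide)
  have horder : orderOf (r 2 : DihedralGroup 4) = 2 := orderOf_eq_prime (by decide) (by decide)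
  rw [map_conj_zpowers_of_mem_center hcenter] at h₂ h₃
  have hc₁ : c₁ = 1 := by
    rw [eq_of_zpowers_eq_zpowers_of_orderOf_eq_two horder h₂,
      eq_of_zpowers_eq_zpowers_of_orderOf_eq_two horder h₃, mul_assoc, r_mul_r,
      show (2 + 2 : ZMod 4) = 0 from rfl, r_zero, mul_one] at hprod
    exact hprod
  rw [hc₁, zpowers_one_eq_bot, eq_comm,
    map_eq_bot_iff_of_injective _ (MulAut.conj g₁).injective, zpowers_eq_bot] at h₁
  exact absurd h₁ (by decide)
end

section
/- Let G be a finite group with subgroups H and K, and suppose a ∈ H. Then the number of left cosets gK ∈ G/K fixed by a (i.e. with agK = gK) equals [G:K] · |C(a) ∩ K| / |C(a)|, where C(a) is the conjugacy class of a in G. -/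
section aux
variable {G : Type*} [Group G] [Fintype G]

private lemma fiber_card (a b : G) (h : IsConj a b) :
    Nat.card {g : G // g⁻¹ * a * g = b} = Nat.card (Subgroup.centralizer {a} : Subgroup G) := by
  obtain ⟨c, hc⟩ := isConj_iff.mp h
  apply Nat.card_congr
  refine ⟨fun g => ⟨g.1 * c, ?_⟩, fun d => ⟨d.1 * c⁻¹, ?_⟩, fun g => ?_, fun d => ?_⟩
  · rw [Subgroup.mem_centralizer_iff]
    rintro y rfl
    have h1 : y * g.1 = g.1 * b := by
      calc y * g.1 = g.1 * (g.1⁻¹ * y * g.1) := by group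
        _ = g.1 * b := by rw [g.2]
    have h2 : c * y = b * c := by rw [← hc]; group
    calc y * (g.1 * c) = g.1 * b * c := by rw [← mul_assoc, h1]
      _ = g.1 * (c * y) := by rw [mul_assoc, h2]
      _ = g.1 * c * y := by rw [mul_assoc]
  · have hd : a * d.1 = d.1 * a := Subgroup.mem_centralizer_iff.mp d.2 a rfl
    calc (d.1 * c⁻¹)⁻¹ * a * (d.1 * c⁻¹) = c * (d.1⁻¹ * (a * d.1)) * c⁻¹ := by group
      _ = c * (d.1⁻¹ * (d.1 * a)) * c⁻¹ := by rw [hd]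
      _ = c * a * c⁻¹ := by group
      _ = b := hc
  · ext; simp [mul_assoc]
  · ext; simp [mul_assoc]

private lemma cardS (K : Subgroup G) (a : G) :
    Nat.card {g : G // g⁻¹ * a * g ∈ K}
      = Nat.card {g : G // IsConj a g ∧ g ∈ K}
        * Nat.card (Subgroup.centralizer {a} : Subgroup G) := by
  classical
  let f : {g : G // g⁻¹ * a * g ∈ K} → {g : G // IsConj a g ∧ g ∈ K} :=
    fun g => ⟨g.1⁻¹ * a * g.1, ⟨isConj_iff.mpr ⟨g.1⁻¹, by group⟩, g.2⟩⟩
  have e1 : {g : G // g⁻¹ * a * g ∈ K} ≃ Σ b, {x // f x = b} := (Equiv.sigmaFiberEquiv f).symm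
  rw [Nat.card_congr e1, Nat.card_eq_fintype_card, Fintype.card_sigma]
  rw [Finset.sum_congr rfl (fun b _ => ?_), Finset.sum_const, Finset.card_univ,
    smul_eq_mul, Nat.card_eq_fintype_card]
  have e2 : {x // f x = b} ≃ {g : G // g⁻¹ * a * g = b.1} := by
    refine ⟨fun x => ⟨x.1.1, by have := congrArg Subtype.val x.2; exact this⟩,
      fun g => ⟨⟨g.1, by rw [g.2]; exact b.2.2⟩, Subtype.ext g.2⟩, fun x => by ext; rfl,
      fun g => by ext; rfl⟩
  rw [← Nat.card_eq_fintype_card, Nat.card_congr e2, fiber_card a b.1 b.2.1,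
    Nat.card_eq_fintype_card]

end aux

theorem card_fixed_cosets_eq
    {G : Type*} [Group G] [Fintype G] (K : Subgroup G) (a : G) :
    (Nat.card {x : G ⧸ K // a • x = x} : ℚ)
      = (K.index : ℚ) * (Nat.card {g : G // IsConj a g ∧ g ∈ K} : ℚ)
        / (Nat.card {g : G // IsConj a g} : ℚ) := by
  classical
  set c := Nat.card (Subgroup.centralizer {a} : Subgroup G) with hc
  set t := Nat.card {g : G // IsConj a g ∧ g ∈ K}
  set o := Nat.card {g : G // IsConj a g}
  set x := Nat.card {x : G ⧸ K // a • x = x}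
  set k := Nat.card K
  have key1 : x * k = t * c := by
    have hSet : {g : G // g⁻¹ * a * g ∈ K}
        ≃ (QuotientGroup.mk ⁻¹' {y : G ⧸ K | a • y = y} : Set G) := by
      apply Equiv.subtypeEquivRight
      intro g
      simp only [Set.mem_preimage, Set.mem_setOf_eq]
      rw [MulAction.Quotient.smul_mk, QuotientGroup.eq]
      constructor
      · intro h
        have := K.inv_mem h
        simpa [mul_assoc] using this
      · intro h
        have := K.inv_mem h
        simpa [mul_assoc] using this
    have := cardS K a
    rw [Nat.card_congr hSet,
      Nat.card_congr (QuotientGroup.preimageMkEquivSubgroupProdSet K _),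
      Nat.card_prod] at this
    rw [mul_comm x k]
    convert this using 2
    rfl
  have key2 : Nat.card G = o * c := by
    have := cardS (⊤ : Subgroup G) a
    rw [Nat.card_congr (Equiv.subtypeUnivEquiv (fun g => Subgroup.mem_top _))] at this
    rw [this]
    congr 1
    exact Nat.card_congr (Equiv.subtypeEquivRight fun g => (and_iff_left (Subgroup.mem_top g)))
  have key3 : K.index * k = Nat.card G := Subgroup.index_mul_card K
  have hk : 0 < k := Nat.card_pos
  have hcpos : 0 < c := Nat.card_pos
  have ho : 0 < o := Nat.card_pos_iff.mpr ⟨⟨⟨a, IsConj.refl a⟩⟩, inferInstance⟩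
  have h1 : x * o * (c * k) = K.index * t * (c * k) := by
    calc x * o * (c * k) = (x * k) * (o * c) := by ring
      _ = (t * c) * (Nat.card G) := by rw [key1, key2]
      _ = (t * c) * (K.index * k) := by rw [key3]
      _ = K.index * t * (c * k) := by ring
  have main : x * o = K.index * t :=
    Nat.eq_of_mul_eq_mul_right (by positivity) h1
  rw [eq_div_iff (by exact_mod_cast ho.ne')]
  exact_mod_cast main
end
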